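/- arXiv:2202.05511 — 2 statements merged into one kernel-verified Lean document; each statement's English description precedes it below -/
import Mathlib

section
/- Let Δ = Δ1 ∪_{Σ1,Σ2} Δ2 be a consistent belief base with syntax splitting, let OP(Δ) = (Δ^0,…,Δ^k) be the inclusion-maximal tolerance partition of Δ, and let OP(Δ_i) = (Δ_i^0,…,Δ_i^{l_i}) be the inclusion-maximal tolerance partition of Δ_i for i = 1,2. If l_1 ≤ l_2, then Δ^j = Δ_1^j ∪ Δ_2^j for every j = 0,…,l_1, and Δ^j = Δ_2^j for every j = l_1+1,…,k. -/
open scoped Classical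

namespace SysW

/-- Propositional formulas over a signature (set of atoms) `V`. -/
inductive PForm (V : Type) : Type
  | var (v : V)
  | tru
  | fls
  | neg (φ : PForm V)
  | conj (φ ψ : PForm V)
  | disj (φ ψ : PForm V)

/-- Evaluation of a formula in a world `ω : V → Bool`. -/
def PForm.eval {V : Type} (ω : V → Bool) : PForm V → Bool
  | var v => ω v
  | tru => true
  | fls => false
  | neg φ => !(PForm.eval ω φ)
  | conj φ ψ => PForm.eval ω φ && PForm.eval ω ψ
  | disj φ ψ => PForm.eval ω φ || PForm.eval ω ψ

/-- The atoms occurring in a formula. -/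
def PForm.vars {V : Type} : PForm V → Set V
  | var v => {v}
  | tru => ∅
  | fls => ∅
  | neg φ => PForm.vars φ
  | conj φ ψ => PForm.vars φ ∪ PForm.vars ψ
  | disj φ ψ => PForm.vars φ ∪ PForm.vars ψ

/-- A conditional (B|A): "if `ante` then usually `cons`". -/
structure CondRule (V : Type) : Type where
  cons : PForm V
  ante : PForm V

/-- The atoms occurring in a conditional. -/
def condVars {V : Type} (r : CondRule V) : Set V := r.ante.vars ∪ r.cons.vars

/-- `ω` verifies (B|A) iff `ω ⊨ A ∧ B`. -/
def verifies {V : Type} (ω : V → Bool) (r : CondRule V) : Prop :=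
  r.ante.eval ω = true ∧ r.cons.eval ω = true

/-- `ω` falsifies (B|A) iff `ω ⊨ A ∧ ¬B`. -/
def falsifies {V : Type} (ω : V → Bool) (r : CondRule V) : Prop :=
  r.ante.eval ω = true ∧ r.cons.eval ω = false

/-- A conditional `r` is tolerated by a set of conditionals `S` if some world
verifies `r` and falsifies no conditional of `S`. -/
def Tolerated {V : Type} (S : Finset (CondRule V)) (r : CondRule V) : Prop :=
  ∃ ω : V → Bool, verifies ω r ∧ ∀ r' ∈ S, ¬ falsifies ω r'

/-- `rest Δ j` is what remains of `Δ` after removing the first `j` parts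
`Δ^0, …, Δ^{j-1}` of the tolerance partition. -/
noncomputable def rest {V : Type} (Δ : Finset (CondRule V)) : ℕ → Finset (CondRule V)
  | 0 => Δ
  | j + 1 => (rest Δ j).filter (fun r => ¬ Tolerated (rest Δ j) r)

/-- `part Δ j` is the part `Δ^j` of the inclusion-maximal tolerance partition of `Δ`:
the conditionals of `rest Δ j` tolerated by `rest Δ j`. -/
noncomputable def part {V : Type} (Δ : Finset (CondRule V)) (j : ℕ) : Finset (CondRule V) :=
  (rest Δ j).filter (fun r => Tolerated (rest Δ j) r)

/-- `Δ` is consistent iff the tolerance partitioning process exhausts `Δ`. -/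
def Consistent {V : Type} (Δ : Finset (CondRule V)) : Prop :=
  ∃ n, rest Δ n = ∅

/-- The tolerance partition of `Δ` is `OP(Δ) = (Δ^0, …, Δ^k)`, i.e. the process
stops exactly after the part with index `k` (all parts `Δ^0, …, Δ^k` nonempty). -/
def IsOPLength {V : Type} (Δ : Finset (CondRule V)) (k : ℕ) : Prop :=
  rest Δ (k + 1) = ∅ ∧ rest Δ k ≠ ∅

/-- `fpart Δ j ω` = `f_Δ^j(ω)`, the set of conditionals of `Δ^j` falsified by `ω`. -/
noncomputable def fpart {V : Type} (Δ : Finset (CondRule V)) (j : ℕ) (ω : V → Bool) :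
    Finset (CondRule V) :=
  (part Δ j).filter (fun r => falsifies ω r)

/-- The preferred structure on worlds `ω ≺_Δ ω'`: there is `m` such that
`f_Δ^i(ω) = f_Δ^i(ω')` for all `i > m` and `f_Δ^m(ω) ⊊ f_Δ^m(ω')`.
(For `i` beyond the last index `k` of the tolerance partition of a consistent `Δ`,
both sides are empty, so this agrees with the textbook definition.) -/
noncomputable def prefRel {V : Type} (Δ : Finset (CondRule V)) (ω ω' : V → Bool) : Prop :=
  ∃ m : ℕ, (∀ i, m < i → fpart Δ i ω = fpart Δ i ω') ∧ fpart Δ m ω ⊂ fpart Δ m ω'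

/-- System W inference `A |~_Δ^w B`: for every world `ω' ⊨ A ∧ ¬B` there is a
world `ω ⊨ A ∧ B` with `ω ≺_Δ ω'`. -/
noncomputable def SysWInf {V : Type} (Δ : Finset (CondRule V)) (A B : PForm V) : Prop :=
  ∀ ω' : V → Bool, A.eval ω' = true ∧ B.eval ω' = false →
    ∃ ω : V → Bool, (A.eval ω = true ∧ B.eval ω = true) ∧ prefRel Δ ω ω'

/-- `Δ = Δ1 ∪_{Sig1,Sig2} Δ2`: `{Sig1, Sig2}` is a partition of the signature, `{Δ1, Δ2}`
partitions `Δ`, and every conditional of `Δi` uses only atoms from `Σi`. -/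
def SyntaxSplitting {V : Type} (Sig1 Sig2 : Set V) (Δ Δ1 Δ2 : Finset (CondRule V)) : Prop :=
  Sig1 ∪ Sig2 = Set.univ ∧ Disjoint Sig1 Sig2 ∧
  Δ = Δ1 ∪ Δ2 ∧ Disjoint Δ1 Δ2 ∧
  (∀ r ∈ Δ1, condVars r ⊆ Sig1) ∧ (∀ r ∈ Δ2, condVars r ⊆ Sig2)

end SysW


namespace SysW

lemma eval_congr {V : Type} {ω ω' : V → Bool} :
    ∀ φ : PForm V, (∀ v ∈ φ.vars, ω v = ω' v) → φ.eval ω = φ.eval ω'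
  | PForm.var v, h => h v (by simp [PForm.vars])
  | PForm.tru, _ => rfl
  | PForm.fls, _ => rfl
  | PForm.neg φ, h => by simp only [PForm.eval, eval_congr φ h]
  | PForm.conj φ ψ, h => by
      simp only [PForm.eval,
        eval_congr φ (fun v hv => h v (Set.mem_union_left _ hv)),
        eval_congr ψ (fun v hv => h v (Set.mem_union_right _ hv))]
  | PForm.disj φ ψ, h => by
      simp only [PForm.eval,
        eval_congr φ (fun v hv => h v (Set.mem_union_left _ hv)),
        eval_congr ψ (fun v hv => h v (Set.mem_union_right _ hv))]

lemma verifies_congr {V : Type} {ω ω' : V → Bool} {r : CondRule V}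
    (h : ∀ v ∈ condVars r, ω v = ω' v) : verifies ω r ↔ verifies ω' r := by
  unfold verifies
  rw [eval_congr r.ante (fun v hv => h v (Set.mem_union_left _ hv)),
      eval_congr r.cons (fun v hv => h v (Set.mem_union_right _ hv))]

lemma falsifies_congr {V : Type} {ω ω' : V → Bool} {r : CondRule V}
    (h : ∀ v ∈ condVars r, ω v = ω' v) : falsifies ω r ↔ falsifies ω' r := by
  unfold falsifies
  rw [eval_congr r.ante (fun v hv => h v (Set.mem_union_left _ hv)),
      eval_congr r.cons (fun v hv => h v (Set.mem_union_right _ hv))]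

lemma tol_union {V : Type} {Sig1 Sig2 : Set V} (hdis : Disjoint Sig1 Sig2)
    {R1 R2 : Finset (CondRule V)}
    (h1 : ∀ r ∈ R1, condVars r ⊆ Sig1) (h2 : ∀ r ∈ R2, condVars r ⊆ Sig2)
    (hω2 : ∃ ω2 : V → Bool, ∀ r ∈ R2, ¬ falsifies ω2 r)
    {r : CondRule V} (hr : condVars r ⊆ Sig1) :
    Tolerated (R1 ∪ R2) r ↔ Tolerated R1 r := by
  constructor
  · rintro ⟨ω, hv, hf⟩
    exact ⟨ω, hv, fun r' hr' => hf r' (Finset.mem_union_left _ hr')⟩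
  · rintro ⟨ω1, hv, hf⟩
    obtain ⟨ω2, hf2⟩ := hω2
    refine ⟨fun v => if v ∈ Sig1 then ω1 v else ω2 v, ?_, ?_⟩
    · exact (verifies_congr (ω' := ω1) (fun v hv' => by simp [hr hv'])).2 hv
    · intro r' hr' hfal
      rcases Finset.mem_union.1 hr' with hm | hm
      · exact hf r' hm ((falsifies_congr (fun v hv' => by simp [h1 r' hm hv'])).1 hfal)
      · have hag : ∀ v ∈ condVars r',
            (fun v => if v ∈ Sig1 then ω1 v else ω2 v) v = ω2 v := by
          intro v hv'
          have : v ∉ Sig1 := fun hc => Set.disjoint_left.mp hdis hc (h2 r' hm hv')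
          simp [this]
        exact hf2 r' hm ((falsifies_congr hag).1 hfal)

lemma rest_succ_subset {V : Type} (S : Finset (CondRule V)) (j : ℕ) :
    rest S (j+1) ⊆ rest S j := Finset.filter_subset _ _

lemma rest_mono {V : Type} (S : Finset (CondRule V)) {j m : ℕ} (h : j ≤ m) :
    rest S m ⊆ rest S j := by
  induction m with
  | zero => simp [Nat.le_zero.mp h]
  | succ m ih =>
    rcases Nat.lt_or_ge j (m+1) with h' | h'
    · exact (rest_succ_subset S m).trans (ih (Nat.lt_succ_iff.mp h'))
    · have : j = m + 1 := le_antisymm h h'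
      subst this; exact subset_rfl

lemma noFalsifier {V : Type} {S : Finset (CondRule V)} (hc : Consistent S) (j : ℕ) :
    ∃ ω : V → Bool, ∀ r ∈ rest S j, ¬ falsifies ω r := by
  by_cases h : rest S j = ∅
  · exact ⟨fun _ => true, by simp [h]⟩
  · have hpart : part S j ≠ ∅ := by
      intro hp
      have hall : ∀ r ∈ rest S j, ¬ Tolerated (rest S j) r := by
        intro r hr ht
        have hmem : r ∈ part S j := Finset.mem_filter.2 ⟨hr, ht⟩
        simp [hp] at hmem
      have hstep : rest S (j+1) = rest S j := by
        show (rest S j).filter (fun r => ¬ Tolerated (rest S j) r) = rest S j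
        exact Finset.filter_eq_self.2 hall
      have heq : ∀ m, rest S (j + m) = rest S j := by
        intro m
        induction m with
        | zero => rfl
        | succ m ih =>
          show (rest S (j + m)).filter (fun r => ¬ Tolerated (rest S (j + m)) r) = rest S j
          rw [ih]
          exact hstep
      obtain ⟨n, hn⟩ := hc
      have h2 : rest S (j + n) ⊆ rest S n := rest_mono S (Nat.le_add_left n j)
      rw [heq n, hn] at h2
      exact h (Finset.subset_empty.mp h2)
    obtain ⟨r, hr⟩ := Finset.nonempty_iff_ne_empty.2 hpart
    obtain ⟨hrR, ω, hv, hf⟩ := Finset.mem_filter.1 hr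
    exact ⟨ω, hf⟩

lemma rest_union_eq {V : Type} {Sig1 Sig2 : Set V} {Δ Δ1 Δ2 : Finset (CondRule V)}
    (hsplit : SyntaxSplitting Sig1 Sig2 Δ Δ1 Δ2)
    (hc1 : Consistent Δ1) (hc2 : Consistent Δ2) (j : ℕ) :
    rest Δ j = rest Δ1 j ∪ rest Δ2 j := by
  obtain ⟨-, hdis, hΔ, -, hv1, hv2⟩ := hsplit
  induction j with
  | zero => exact hΔ
  | succ j ih =>
    have hs1 : ∀ r ∈ rest Δ1 j, condVars r ⊆ Sig1 :=
      fun r hr => hv1 r (rest_mono Δ1 (Nat.zero_le j) hr)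
    have hs2 : ∀ r ∈ rest Δ2 j, condVars r ⊆ Sig2 :=
      fun r hr => hv2 r (rest_mono Δ2 (Nat.zero_le j) hr)
    have key1 : ∀ r ∈ rest Δ1 j,
        Tolerated (rest Δ1 j ∪ rest Δ2 j) r ↔ Tolerated (rest Δ1 j) r :=
      fun r hr => tol_union hdis hs1 hs2 (noFalsifier hc2 j) (hs1 r hr)
    have key2 : ∀ r ∈ rest Δ2 j,
        Tolerated (rest Δ1 j ∪ rest Δ2 j) r ↔ Tolerated (rest Δ2 j) r := by
      intro r hr
      rw [Finset.union_comm]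
      exact tol_union hdis.symm hs2 hs1 (noFalsifier hc1 j) (hs2 r hr)
    show (rest Δ j).filter (fun r => ¬ Tolerated (rest Δ j) r)
        = (rest Δ1 j).filter (fun r => ¬ Tolerated (rest Δ1 j) r)
          ∪ (rest Δ2 j).filter (fun r => ¬ Tolerated (rest Δ2 j) r)
    rw [ih, Finset.filter_union]
    congr 1
    · exact Finset.filter_congr (fun r hr => not_congr (key1 r hr))
    · exact Finset.filter_congr (fun r hr => not_congr (key2 r hr))

lemma part_union_eq {V : Type} {Sig1 Sig2 : Set V} {Δ Δ1 Δ2 : Finset (CondRule V)}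
    (hsplit : SyntaxSplitting Sig1 Sig2 Δ Δ1 Δ2)
    (hc1 : Consistent Δ1) (hc2 : Consistent Δ2) (j : ℕ) :
    part Δ j = part Δ1 j ∪ part Δ2 j := by
  have hdis := hsplit.2.1
  have hv1 := hsplit.2.2.2.2.1
  have hv2 := hsplit.2.2.2.2.2
  have hs1 : ∀ r ∈ rest Δ1 j, condVars r ⊆ Sig1 :=
    fun r hr => hv1 r (rest_mono Δ1 (Nat.zero_le j) hr)
  have hs2 : ∀ r ∈ rest Δ2 j, condVars r ⊆ Sig2 :=
    fun r hr => hv2 r (rest_mono Δ2 (Nat.zero_le j) hr)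
  have key1 : ∀ r ∈ rest Δ1 j,
      Tolerated (rest Δ1 j ∪ rest Δ2 j) r ↔ Tolerated (rest Δ1 j) r :=
    fun r hr => tol_union hdis hs1 hs2 (noFalsifier hc2 j) (hs1 r hr)
  have key2 : ∀ r ∈ rest Δ2 j,
      Tolerated (rest Δ1 j ∪ rest Δ2 j) r ↔ Tolerated (rest Δ2 j) r := by
    intro r hr
    rw [Finset.union_comm]
    exact tol_union hdis.symm hs2 hs1 (noFalsifier hc1 j) (hs2 r hr)
  unfold part
  rw [rest_union_eq hsplit hc1 hc2 j, Finset.filter_union]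
  congr 1
  · exact Finset.filter_congr key1
  · exact Finset.filter_congr key2

end SysW

open SysW in
/-- For a consistent belief base `Δ = Δ1 ∪_{Σ1,Σ2} Δ2` with syntax splitting,
tolerance partitions `OP(Δ) = (Δ^0,…,Δ^k)` and `OP(Δi) = (Δi^0,…,Δi^{l_i})` (i = 1,2),
if `l1 ≤ l2` then `Δ^j = Δ1^j ∪ Δ2^j` for `j = 0,…,l1` and `Δ^j = Δ2^j` for `j = l1+1,…,k`. -/
theorem stmt2 {V : Type} [Fintype V] (Sig1 Sig2 : Set V) (Δ Δ1 Δ2 : Finset (CondRule V))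
    (hsplit : SyntaxSplitting Sig1 Sig2 Δ Δ1 Δ2) (hcons : Consistent Δ)
    (k l1 l2 : ℕ) (hk : IsOPLength Δ k) (hl1 : IsOPLength Δ1 l1) (hl2 : IsOPLength Δ2 l2)
    (hle : l1 ≤ l2) :
    (∀ j ≤ l1, part Δ j = part Δ1 j ∪ part Δ2 j) ∧
    (∀ j, l1 + 1 ≤ j → j ≤ k → part Δ j = part Δ2 j) := by
  have hc1 : Consistent Δ1 := ⟨l1 + 1, hl1.1⟩
  have hc2 : Consistent Δ2 := ⟨l2 + 1, hl2.1⟩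
  constructor
  · intro j _
    exact part_union_eq hsplit hc1 hc2 j
  · intro j hj _
    have hrest : rest Δ1 j = ∅ :=
      Finset.subset_empty.mp (hl1.1 ▸ rest_mono Δ1 hj)
    have hpart1 : part Δ1 j = ∅ := by
      unfold part
      rw [hrest]
      rfl
    rw [part_union_eq hsplit hc1 hc2 j, hpart1, Finset.empty_union]
end

section
/- Let Δ = Δ1 ∪_{Σ1,Σ2} Δ2 be a consistent belief base with syntax splitting and let ω*, ω' ∈ Ω_Σ. If ω* ≺_{Δ1} ω', then the world ω = (ω*|_{Σ1} · ω'|_{Σ2}) (agreeing with ω* on Σ1 and with ω' on Σ2) satisfies ω ≺_Δ ω'. -/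
open scoped Classical

section Aux

open SysW

variable {V : Type}

lemma eval_agree (ω ω' : V → Bool) :
    ∀ φ : PForm V, (∀ v ∈ φ.vars, ω v = ω' v) → φ.eval ω = φ.eval ω' := by
  intro φ
  induction φ with
  | var v => intro h; exact h v rfl
  | tru => intro _; rfl
  | fls => intro _; rfl
  | neg φ ih => intro h; simp [PForm.eval, ih h]
  | conj φ ψ ih1 ih2 =>
      intro h
      simp only [PForm.eval]
      rw [ih1 fun v hv => h v (Or.inl hv), ih2 fun v hv => h v (Or.inr hv)]
  | disj φ ψ ih1 ih2 =>
      intro h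
      simp only [PForm.eval]
      rw [ih1 fun v hv => h v (Or.inl hv), ih2 fun v hv => h v (Or.inr hv)]

lemma falsifies_agree {ω ω' : V → Bool} {r : CondRule V}
    (h : ∀ v ∈ condVars r, ω v = ω' v) : falsifies ω r ↔ falsifies ω' r := by
  have ha : r.ante.eval ω = r.ante.eval ω' :=
    eval_agree ω ω' _ fun v hv => h v (Or.inl hv)
  have hc : r.cons.eval ω = r.cons.eval ω' :=
    eval_agree ω ω' _ fun v hv => h v (Or.inr hv)
  unfold falsifies; rw [ha, hc]

lemma verifies_agree {ω ω' : V → Bool} {r : CondRule V}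
    (h : ∀ v ∈ condVars r, ω v = ω' v) : verifies ω r ↔ verifies ω' r := by
  have ha : r.ante.eval ω = r.ante.eval ω' :=
    eval_agree ω ω' _ fun v hv => h v (Or.inl hv)
  have hc : r.cons.eval ω = r.cons.eval ω' :=
    eval_agree ω ω' _ fun v hv => h v (Or.inr hv)
  unfold verifies; rw [ha, hc]

lemma rest_subset_base (Δ : Finset (CondRule V)) : ∀ j, rest Δ j ⊆ Δ
  | 0 => subset_rfl
  | j + 1 => (Finset.filter_subset _ _).trans (rest_subset_base Δ j)

lemma rest_le_subset (Δ : Finset (CondRule V)) {j n : ℕ} (h : j ≤ n) :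
    rest Δ n ⊆ rest Δ j := by
  induction n with
  | zero => simpa using (Nat.le_zero.mp h) ▸ subset_rfl
  | succ n ih =>
      rcases Nat.lt_or_ge j (n+1) with hlt | hge
      · exact (Finset.filter_subset _ _).trans (ih (Nat.lt_succ_iff.mp hlt))
      · have : j = n + 1 := le_antisymm h hge
        subst this; exact subset_rfl

lemma exists_notFalsify {Δ : Finset (CondRule V)} (hcons : Consistent Δ) (j : ℕ) :
    ∃ ω0 : V → Bool, ∀ r ∈ rest Δ j, ¬ falsifies ω0 r := by
  by_cases hne : rest Δ j = ∅
  · exact ⟨fun _ => true, by simp [hne]⟩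
  · by_cases htol : ∃ r, Tolerated (rest Δ j) r
    · obtain ⟨r, ω0, _, hf⟩ := htol
      exact ⟨ω0, hf⟩
    · exfalso
      push_neg at htol
      have hstall : ∀ m, rest Δ (j + m) = rest Δ j := by
        intro m
        induction m with
        | zero => rfl
        | succ m ih =>
            have : rest Δ (j + (m+1)) = (rest Δ (j+m)).filter
                (fun r => ¬ Tolerated (rest Δ (j+m)) r) := rfl
            rw [this, ih, Finset.filter_eq_self.mpr (fun r _ => htol r)]
      obtain ⟨n, hn⟩ := hcons
      rcases Nat.lt_or_ge j n with hlt | hge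
      · have := hstall (n - j)
        rw [Nat.add_sub_cancel' hlt.le] at this
        exact hne (this ▸ hn)
      · exact hne (Finset.subset_empty.mp (hn ▸ rest_le_subset Δ hge))

lemma tol_lift (S : Set V) (R1 R2 : Finset (CondRule V))
    (h1 : ∀ r ∈ R1, condVars r ⊆ S) (h2 : ∀ r ∈ R2, Disjoint (condVars r) S)
    (ω0 : V → Bool) (hω0 : ∀ r ∈ R2, ¬ falsifies ω0 r)
    (r : CondRule V) (hr : condVars r ⊆ S)
    (htol : Tolerated R1 r) : Tolerated (R1 ∪ R2) r := by
  obtain ⟨ω1, hv, hf⟩ := htol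
  refine ⟨fun v => if v ∈ S then ω1 v else ω0 v, ?_, ?_⟩
  · rw [verifies_agree (ω' := ω1) fun v hv' => if_pos (hr hv')]
    exact hv
  · intro r' hr'
    rcases Finset.mem_union.mp hr' with h | h
    · rw [falsifies_agree (ω' := ω1) fun v hv' => if_pos (h1 r' h hv')]
      exact hf r' h
    · rw [falsifies_agree (ω' := ω0)
        fun v hv' => if_neg (Set.disjoint_left.mp (h2 r' h) hv')]
      exact hω0 r' h

lemma tol_iff (Sig1 Sig2 : Set V) (Δ Δ1 Δ2 : Finset (CondRule V))
    (hsplit : SyntaxSplitting Sig1 Sig2 Δ Δ1 Δ2) (hcons : Consistent Δ) (j : ℕ)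
    (ih : rest Δ j = rest Δ1 j ∪ rest Δ2 j) :
    (∀ r ∈ rest Δ1 j, (Tolerated (rest Δ j) r ↔ Tolerated (rest Δ1 j) r)) ∧
    (∀ r ∈ rest Δ2 j, (Tolerated (rest Δ j) r ↔ Tolerated (rest Δ2 j) r)) := by
  obtain ⟨hU, hD, hΔ, hDd, h1, h2⟩ := hsplit
  obtain ⟨ω0, hω0⟩ := exists_notFalsify hcons j
  have hv1 : ∀ r ∈ rest Δ1 j, condVars r ⊆ Sig1 :=
    fun r hr => h1 r (rest_subset_base Δ1 j hr)
  have hv2 : ∀ r ∈ rest Δ2 j, condVars r ⊆ Sig2 :=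
    fun r hr => h2 r (rest_subset_base Δ2 j hr)
  have hd1 : ∀ r ∈ rest Δ1 j, Disjoint (condVars r) Sig2 :=
    fun r hr => Set.disjoint_of_subset_left (hv1 r hr) hD
  have hd2 : ∀ r ∈ rest Δ2 j, Disjoint (condVars r) Sig1 :=
    fun r hr => Set.disjoint_of_subset_left (hv2 r hr) (hD.symm)
  have hω01 : ∀ r ∈ rest Δ1 j, ¬ falsifies ω0 r :=
    fun r hr => hω0 r (ih ▸ Finset.mem_union_left _ hr)
  have hω02 : ∀ r ∈ rest Δ2 j, ¬ falsifies ω0 r :=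
    fun r hr => hω0 r (ih ▸ Finset.mem_union_right _ hr)
  constructor
  · intro r hr
    constructor
    · rintro ⟨ωw, hv, hf⟩
      exact ⟨ωw, hv, fun r' hr' => hf r' (ih ▸ Finset.mem_union_left _ hr')⟩
    · intro ht
      rw [ih]
      exact tol_lift Sig1 _ _ hv1 hd2 ω0 hω02 r (hv1 r hr) ht
  · intro r hr
    constructor
    · rintro ⟨ωw, hv, hf⟩
      exact ⟨ωw, hv, fun r' hr' => hf r' (ih ▸ Finset.mem_union_right _ hr')⟩
    · intro ht
      rw [ih, Finset.union_comm]
      exact tol_lift Sig2 _ _ hv2 hd1 ω0 hω01 r (hv2 r hr) ht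

lemma rest_split (Sig1 Sig2 : Set V) (Δ Δ1 Δ2 : Finset (CondRule V))
    (hsplit : SyntaxSplitting Sig1 Sig2 Δ Δ1 Δ2) (hcons : Consistent Δ) (j : ℕ) :
    rest Δ j = rest Δ1 j ∪ rest Δ2 j := by
  induction j with
  | zero => exact hsplit.2.2.1
  | succ j ih =>
      obtain ⟨key1, key2⟩ := tol_iff Sig1 Sig2 Δ Δ1 Δ2 hsplit hcons j ih
      show (rest Δ j).filter _ = (rest Δ1 j).filter _ ∪ (rest Δ2 j).filter _
      ext r
      simp only [Finset.mem_filter, Finset.mem_union]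
      constructor
      · rintro ⟨hmem, hnt⟩
        rw [ih] at hmem
        rcases Finset.mem_union.mp hmem with h | h
        · exact Or.inl ⟨h, fun ht => hnt ((key1 r h).mpr ht)⟩
        · exact Or.inr ⟨h, fun ht => hnt ((key2 r h).mpr ht)⟩
      · rintro (⟨h, hnt⟩ | ⟨h, hnt⟩)
        · exact ⟨by rw [ih]; exact Finset.mem_union_left _ h,
            fun ht => hnt ((key1 r h).mp ht)⟩
        · exact ⟨by rw [ih]; exact Finset.mem_union_right _ h,
            fun ht => hnt ((key2 r h).mp ht)⟩

lemma part_split (Sig1 Sig2 : Set V) (Δ Δ1 Δ2 : Finset (CondRule V))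
    (hsplit : SyntaxSplitting Sig1 Sig2 Δ Δ1 Δ2) (hcons : Consistent Δ) (j : ℕ) :
    part Δ j = part Δ1 j ∪ part Δ2 j := by
  have ih := rest_split Sig1 Sig2 Δ Δ1 Δ2 hsplit hcons j
  obtain ⟨key1, key2⟩ := tol_iff Sig1 Sig2 Δ Δ1 Δ2 hsplit hcons j ih
  unfold part
  ext r
  simp only [Finset.mem_filter, Finset.mem_union]
  constructor
  · rintro ⟨hmem, ht⟩
    rw [ih] at hmem
    rcases Finset.mem_union.mp hmem with h | h
    · exact Or.inl ⟨h, (key1 r h).mp ht⟩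
    · exact Or.inr ⟨h, (key2 r h).mp ht⟩
  · rintro (⟨h, ht⟩ | ⟨h, ht⟩)
    · exact ⟨by rw [ih]; exact Finset.mem_union_left _ h, (key1 r h).mpr ht⟩
    · exact ⟨by rw [ih]; exact Finset.mem_union_right _ h, (key2 r h).mpr ht⟩

lemma fpart_subset_base (Δ : Finset (CondRule V)) (j : ℕ) (ω : V → Bool) :
    fpart Δ j ω ⊆ Δ :=
  (Finset.filter_subset _ _).trans ((Finset.filter_subset _ _).trans (rest_subset_base Δ j))

lemma fpart_split (Sig1 Sig2 : Set V) (Δ Δ1 Δ2 : Finset (CondRule V))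
    (hsplit : SyntaxSplitting Sig1 Sig2 Δ Δ1 Δ2) (hcons : Consistent Δ) (j : ℕ)
    (ω : V → Bool) : fpart Δ j ω = fpart Δ1 j ω ∪ fpart Δ2 j ω := by
  unfold fpart
  rw [part_split Sig1 Sig2 Δ Δ1 Δ2 hsplit hcons j, Finset.filter_union]

lemma fpart_agree {Sig : Set V} {Δ0 : Finset (CondRule V)}
    (hv : ∀ r ∈ Δ0, condVars r ⊆ Sig) {ω ω' : V → Bool}
    (hagr : ∀ v ∈ Sig, ω v = ω' v) (j : ℕ) : fpart Δ0 j ω = fpart Δ0 j ω' := by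
  unfold fpart
  apply Finset.filter_congr
  intro r hr
  have : ∀ v ∈ condVars r, ω v = ω' v := by
    intro v hv'
    exact hagr v (hv r ((Finset.filter_subset _ _).trans (rest_subset_base Δ0 j) hr) hv')
  exact falsifies_agree this

end Aux

open SysW in
/-- For a consistent belief base `Δ = Δ1 ∪_{Σ1,Σ2} Δ2` with syntax splitting
and worlds `ω*, ω'`, if `ω* ≺_{Δ1} ω'`, then the world `ω = (ω*|_{Σ1} · ω'|_{Σ2})`
(agreeing with `ω*` on `Σ1` and with `ω'` on `Σ2`) satisfies `ω ≺_Δ ω'`. -/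
theorem stmt13 {V : Type} [Fintype V] (Sig1 Sig2 : Set V) (Δ Δ1 Δ2 : Finset (CondRule V))
    (hsplit : SyntaxSplitting Sig1 Sig2 Δ Δ1 Δ2) (hcons : Consistent Δ)
    (ωstar ω' : V → Bool) (h : prefRel Δ1 ωstar ω')
    (ω : V → Bool) (hω1 : ∀ v ∈ Sig1, ω v = ωstar v) (hω2 : ∀ v ∈ Sig2, ω v = ω' v) :
    prefRel Δ ω ω' := by
  obtain ⟨m, hgt, hss⟩ := h
  have hf1 : ∀ i, fpart Δ1 i ω = fpart Δ1 i ωstar :=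
    fun i => fpart_agree hsplit.2.2.2.2.1 hω1 i
  have hf2 : ∀ i, fpart Δ2 i ω = fpart Δ2 i ω' :=
    fun i => fpart_agree hsplit.2.2.2.2.2 hω2 i
  have hsp : ∀ (i : ℕ) (ωx : V → Bool), fpart Δ i ωx = fpart Δ1 i ωx ∪ fpart Δ2 i ωx :=
    fun i ωx => fpart_split Sig1 Sig2 Δ Δ1 Δ2 hsplit hcons i ωx
  refine ⟨m, ?_, ?_⟩
  · intro i hi
    rw [hsp i ω, hsp i ω', hf1, hf2, hgt i hi]
  · rw [hsp m ω, hsp m ω', hf1, hf2]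
    obtain ⟨r, hrB, hrA⟩ := Finset.exists_of_ssubset hss
    refine (Finset.ssubset_iff_of_subset
      (Finset.union_subset_union_left hss.subset)).mpr ⟨r, Finset.mem_union_left _ hrB, ?_⟩
    intro hmem
    rcases Finset.mem_union.mp hmem with hA | hC
    · exact hrA hA
    · exact Finset.disjoint_left.mp hsplit.2.2.2.1
        (fpart_subset_base Δ1 m ω' hrB) (fpart_subset_base Δ2 m ω' hC)
end
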